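/- Let $A \subset \mathbb{R}^d$ be a convex body with $0 \in A$, let $\gamma > 1$, and let $x \notin \gamma A$. Then $\Psi_{\gamma A}(x) \ge \Psi_A(x)$, where $\Psi_K(x)$ denotes the average depth/distance ratio of $K$ seen from $x$. -/

import Mathlib

open MeasureTheory Set Pointwise

/-- Orthogonal projection of `y` onto the hyperplane `x^⊥`. -/
noncomputable def projHyp {d : ℕ} (x y : EuclideanSpace ℝ (Fin d)) : EuclideanSpace ℝ (Fin d) :=
  (Submodule.orthogonalProjectionOnto (Submodule.span ℝ {x})ᗮ y : EuclideanSpace ℝ (Fin d))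

/-- The shadow of `K` in direction `x`: projection of `K` onto `x^⊥`. -/
noncomputable def shadow {d : ℕ} (K : Set (EuclideanSpace ℝ (Fin d)))
    (x : EuclideanSpace ℝ (Fin d)) : Set (EuclideanSpace ℝ (Fin d)) :=
  projHyp x '' K

/-- The point of `K` on the line `{z + t x : t ∈ ℝ}` minimising `⟨y, x⟩`. -/
noncomputable def piK {d : ℕ} (K : Set (EuclideanSpace ℝ (Fin d)))
    (x z : EuclideanSpace ℝ (Fin d)) : EuclideanSpace ℝ (Fin d) :=
  z + (sInf {t : ℝ | z + t • x ∈ K}) • x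

/-- The depth/distance ratio `Ψ_K(x, z)`: the ratio of the one-dimensional Hausdorff
measure of `K ∩ [x, π_K(x,z)]` to the length of the chord `[x, π_K(x,z)]`. -/
noncomputable def PsiPt {d : ℕ} (K : Set (EuclideanSpace ℝ (Fin d)))
    (x z : EuclideanSpace ℝ (Fin d)) : ℝ :=
  ((μH[1] (K ∩ segment ℝ x (piK K x z))) / (μH[1] (segment ℝ x (piK K x z)))).toReal

/-- The average depth/distance ratio `Ψ_K(x)` with respect to the uniform
probability measure on the shadow `P_x(K)`. -/
noncomputable def PsiAvg {d : ℕ} (K : Set (EuclideanSpace ℝ (Fin d)))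
    (x : EuclideanSpace ℝ (Fin d)) : ℝ :=
  (∫ z in shadow K x, PsiPt K x z ∂(μH[(d : ℝ) - 1])) / (μH[(d : ℝ) - 1] (shadow K x)).toReal

/-- The maximum depth/distance ratio `Ψ^∞_K(x)`. -/
noncomputable def PsiSup {d : ℕ} (K : Set (EuclideanSpace ℝ (Fin d)))
    (x : EuclideanSpace ℝ (Fin d)) : ℝ :=
  sSup (PsiPt K x '' shadow K x)

/-!
For `z` in the shadow, convexity makes `K ∩ [x, π_K(x,z)]` a terminal subsegment of the chord,
so `Ψ_K(x,z) = 1 - s`, where `s` is the parameter at which the chord enters `K`. Scaling by `γ`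
maps the shadow of `A` onto that of `γA` and `π_A(x,z)` to `π_{γA}(x,γz)`; as `A` is star-shaped
about `0`, the chord from `x` to `γ π_A(x,z)` enters `γA` no later than the chord to `π_A(x,z)`
enters `A`, so `Ψ_A(x,z) ≤ Ψ_{γA}(x,γz)`. Substituting `z ↦ γz`, the integral over the shadow
and its measure both pick up the factor `γ^(d-1)`, which cancels in the average.
-/

open scoped ENNReal

section HausdorffScaling

variable {F G : Type*} [NormedAddCommGroup F] [NormedSpace ℝ F] [MeasurableSpace F] [BorelSpace F]
  [NormedAddCommGroup G] [NormedSpace ℝ G]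

theorem measurePreserving_smul_hausdorffMeasure {s : ℝ} (hs : 0 ≤ s) {c : ℝ} (hc : c ≠ 0) :
    MeasurePreserving (c • · : F → F) ((‖c‖₊ ^ s) • μH[s]) μH[s] := by
  refine ⟨(continuous_const_smul c).measurable, Measure.ext fun t ht => ?_⟩
  rw [Measure.map_apply (continuous_const_smul c).measurable ht, Measure.smul_apply,
    preimage_smul₀ hc, Measure.hausdorffMeasure_smul₀ hs (inv_ne_zero hc), smul_smul,
    ← NNReal.mul_rpow, ← nnnorm_mul, mul_inv_cancel₀ hc, nnnorm_one, NNReal.one_rpow, one_smul]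

theorem setIntegral_smul_set_hausdorffMeasure {s : ℝ} (hs : 0 ≤ s) {c : ℝ} (hc : c ≠ 0)
    (B : Set F) (g : F → G) :
    ∫ y in c • B, g y ∂μH[s] = |c| ^ s • ∫ z in B, g (c • z) ∂μH[s] := by
  rw [← image_smul, (measurePreserving_smul_hausdorffMeasure hs hc).setIntegral_image_emb
    (Homeomorph.smulOfNeZero c hc).measurableEmbedding, Measure.restrict_smul,
    integral_smul_nnreal_measure, NNReal.smul_def, NNReal.coe_rpow, coe_nnnorm, Real.norm_eq_abs]

end HausdorffScaling

section EntryParam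

variable {V : Type*} [NormedAddCommGroup V] [NormedSpace ℝ V]

noncomputable def entryParam (K : Set V) (x p : V) : ℝ :=
  sInf {s ∈ Icc (0 : ℝ) 1 | AffineMap.lineMap x p s ∈ K}

variable {K : Set V} {x p : V}

theorem entryParam_mem (hK : IsClosed K) (hp : p ∈ K) :
    entryParam K x p ∈ {s ∈ Icc (0 : ℝ) 1 | AffineMap.lineMap x p s ∈ K} := by
  refine IsClosed.csInf_mem ?_ ⟨1, right_mem_Icc.2 zero_le_one, by simpa using hp⟩
    ⟨0, fun s hs => hs.1.1⟩
  exact isClosed_Icc.inter (hK.preimage (AffineMap.lineMap_continuous))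

theorem setOf_lineMap_mem_eq_Icc_entryParam (hK : IsClosed K) (hKconv : Convex ℝ K)
    (hp : p ∈ K) :
    {s ∈ Icc (0 : ℝ) 1 | AffineMap.lineMap x p s ∈ K} = Icc (entryParam K x p) 1 := by
  have hconv : Convex ℝ {s ∈ Icc (0 : ℝ) 1 | AffineMap.lineMap x p s ∈ K} :=
    (convex_Icc 0 1).inter (hKconv.affine_preimage (AffineMap.lineMap x p))
  refine Subset.antisymm (fun s hs => ⟨csInf_le ⟨0, fun s hs => hs.1.1⟩ hs, hs.1.2⟩) ?_
  exact hconv.ordConnected.out (entryParam_mem hK hp)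
    ⟨right_mem_Icc.2 zero_le_one, by simpa using hp⟩

theorem inter_segment_eq_image_entryParam (hK : IsClosed K) (hKconv : Convex ℝ K) (hp : p ∈ K) :
    K ∩ segment ℝ x p = AffineMap.lineMap x p '' Icc (entryParam K x p) 1 := by
  rw [segment_eq_image_lineMap, ← setOf_lineMap_mem_eq_Icc_entryParam hK hKconv hp]
  ext y
  constructor
  · rintro ⟨hyK, s, hs, rfl⟩
    exact ⟨s, ⟨hs, hyK⟩, rfl⟩
  · rintro ⟨s, ⟨hs, hsK⟩, rfl⟩
    exact ⟨hsK, s, hs, rfl⟩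

theorem hausdorffMeasure_inter_segment_div [MeasurableSpace V] [BorelSpace V]
    (hK : IsClosed K) (hKconv : Convex ℝ K) (hp : p ∈ K) (hxp : x ≠ p) :
    (μH[1] (K ∩ segment ℝ x p) / μH[1] (segment ℝ x p)).toReal = 1 - entryParam K x p := by
  rw [inter_segment_eq_image_entryParam hK hKconv hp, hausdorffMeasure_lineMap_image,
    hausdorffMeasure_real, Real.volume_Icc, hausdorffMeasure_segment, edist_nndist,
    ENNReal.smul_def, smul_eq_mul, ENNReal.toReal_div, ENNReal.toReal_mul, ENNReal.coe_toReal,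
    ENNReal.toReal_ofReal (sub_nonneg.2 (entryParam_mem hK hp).1.2)]
  exact mul_div_cancel_left₀ _ (dist_pos.2 hxp).ne'

theorem entryParam_smul_le {A : Set V} (hAconv : Convex ℝ A) (h0 : (0 : V) ∈ A) (hp : p ∈ A)
    {γ : ℝ} (hγ : 1 ≤ γ) : entryParam (γ • A) x (γ • p) ≤ entryParam A x p := by
  have hγ0 : 0 < γ := zero_lt_one.trans_le hγ
  refine csInf_le_csInf ⟨0, fun s hs => hs.1.1⟩
    ⟨1, right_mem_Icc.2 zero_le_one, by simpa using hp⟩ ?_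
  rintro s ⟨hs, hsA⟩
  refine ⟨hs, (mem_smul_set_iff_inv_smul_mem₀ hγ0.ne' _ _).2 ?_⟩
  -- the scaled-down point is a convex combination of `lineMap x p s ∈ A` and `s • p ∈ A`
  have key : γ⁻¹ • AffineMap.lineMap x (γ • p) s
      = γ⁻¹ • AffineMap.lineMap x p s + (1 - γ⁻¹) • (s • p) := by
    simp only [AffineMap.lineMap_apply_module']
    match_scalars <;> field_simp; ring
  rw [key]
  exact hAconv hsA (hAconv.smul_mem_of_zero_mem h0 hp hs) (inv_nonneg.2 hγ0.le)
    (sub_nonneg.2 (inv_le_one_of_one_le₀ hγ)) (by ring)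

theorem entryParam_le_iff (hK : IsClosed K) (hKconv : Convex ℝ K) (hp : p ∈ K) {c : ℝ} :
    entryParam K x p ≤ c ↔ 0 ≤ c ∧ AffineMap.lineMap x p (min c 1) ∈ K := by
  have hIcc := setOf_lineMap_mem_eq_Icc_entryParam (x := x) hK hKconv hp
  obtain ⟨⟨he0, he1⟩, -⟩ := entryParam_mem (x := x) hK hp
  constructor
  · intro h
    have hc : min c 1 ∈ Icc (entryParam K x p) 1 := ⟨le_min h he1, min_le_right c 1⟩
    rw [← hIcc] at hc
    exact ⟨he0.trans h, hc.2⟩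
  · rintro ⟨hc0, hcK⟩
    have hc : min c 1 ∈ Icc (entryParam K x p) 1 := by
      rw [← hIcc]
      exact ⟨⟨le_min hc0 zero_le_one, min_le_right c 1⟩, hcK⟩
    exact hc.1.trans (min_le_left c 1)

end EntryParam

section Measurability

theorem measurable_indicator_of_measurableSet_sublevel {α : Type*} [MeasurableSpace α]
    {f : α → ℝ} {s : Set α} (hs : MeasurableSet s)
    (hf : ∀ a, MeasurableSet {z | z ∈ s ∧ f z ≤ a}) : Measurable (s.indicator f) := by
  refine measurable_of_Iic fun a => ?_
  have : s.indicator f ⁻¹' Iic a = {z | z ∈ s ∧ f z ≤ a} ∪ (sᶜ ∩ {_z | 0 ≤ a}) := by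
    ext z
    by_cases hz : z ∈ s <;> simp [hz]
  rw [this]
  exact (hf a).union (hs.compl.inter (MeasurableSet.const _))

variable {V : Type*} [NormedAddCommGroup V] [NormedSpace ℝ V] [MeasurableSpace V] [BorelSpace V]

theorem measurable_indicator_entryParam {α : Type*} [MeasurableSpace α] {K : Set V}
    (hK : IsClosed K) (hKconv : Convex ℝ K) (x : V) {P : α → V} (hP : Measurable P)
    {s : Set α} (hs : MeasurableSet s) (hPs : MapsTo P s K) :
    Measurable (s.indicator fun a => entryParam K x (P a)) := by
  refine measurable_indicator_of_measurableSet_sublevel hs fun c => ?_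
  have : {a | a ∈ s ∧ entryParam K x (P a) ≤ c}
      = s ∩ ({_a | 0 ≤ c} ∩ (fun a => AffineMap.lineMap x (P a) (min c 1)) ⁻¹' K) := by
    ext a
    exact and_congr_right fun ha => entryParam_le_iff hK hKconv (hPs ha)
  rw [this]
  refine hs.inter ((MeasurableSet.const _).inter (hK.measurableSet.preimage ?_))
  have : Continuous fun p : V => AffineMap.lineMap x p (min c 1) := by fun_prop
  exact this.measurable.comp hP

end Measurability

theorem isCompact_setOf_add_smul_mem {V : Type*} [NormedAddCommGroup V] [NormedSpace ℝ V]
    {K : Set V} (hK : IsCompact K) {x : V} (hx : x ≠ 0) (z : V) :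
    IsCompact {t : ℝ | z + t • x ∈ K} :=
  ((Homeomorph.addLeft z).isClosedEmbedding.comp
    (isClosedEmbedding_smul_left hx)).isCompact_preimage hK

section Shadow

variable {d : ℕ}

local notation "E" => EuclideanSpace ℝ (Fin d)

theorem projHyp_eq_starProjection (x y : E) : projHyp x y = (ℝ ∙ x)ᗮ.starProjection y := rfl

theorem continuous_projHyp (x : E) : Continuous (projHyp x) :=
  ((ℝ ∙ x)ᗮ.starProjection).continuous

theorem projHyp_smul (x : E) (c : ℝ) (y : E) : projHyp x (c • y) = c • projHyp x y :=
  map_smul ((ℝ ∙ x)ᗮ.starProjection) c y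

theorem projHyp_add_smul_self (x z : E) (t : ℝ) : projHyp x (z + t • x) = projHyp x z := by
  simp only [projHyp_eq_starProjection, map_add, map_smul,
    Submodule.starProjection_orthogonalComplement_singleton_eq_zero, smul_zero, add_zero]

theorem projHyp_projHyp (x y : E) : projHyp x (projHyp x y) = projHyp x y :=
  Submodule.starProjection_eq_self_iff.2 (Submodule.starProjection_apply_mem _ y)

theorem inner_projHyp (x y : E) : inner ℝ x (projHyp x y) = 0 :=
  Submodule.inner_right_of_mem_orthogonal (Submodule.mem_span_singleton_self x)
    (Submodule.starProjection_apply_mem _ y)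

theorem projHyp_add_smul_eq (x y : E) : projHyp x y + (inner ℝ x y / ‖x‖ ^ 2) • x = y := by
  conv_rhs => rw [← (ℝ ∙ x).starProjection_add_starProjection_orthogonal y]
  rw [projHyp_eq_starProjection, add_comm, Submodule.starProjection_singleton]
  rfl

variable {K : Set (EuclideanSpace ℝ (Fin d))} {x z : EuclideanSpace ℝ (Fin d)}

theorem projHyp_of_mem_shadow (hz : z ∈ shadow K x) : projHyp x z = z := by
  obtain ⟨a, -, rfl⟩ := hz
  exact projHyp_projHyp x a

theorem inner_of_mem_shadow (hz : z ∈ shadow K x) : inner ℝ x z = 0 := by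
  obtain ⟨a, -, rfl⟩ := hz
  exact inner_projHyp x a

theorem isCompact_shadow (hK : IsCompact K) (x : EuclideanSpace ℝ (Fin d)) :
    IsCompact (shadow K x) :=
  hK.image (continuous_projHyp x)

theorem shadow_smul (γ : ℝ) (K : Set E) (x : E) : shadow (γ • K) x = γ • shadow K x := by
  simp only [shadow, ← image_smul, image_image, projHyp_smul]

noncomputable def lowestParam (K : Set E) (x z : E) : ℝ := sInf {t : ℝ | z + t • x ∈ K}

theorem piK_eq_add_lowestParam_smul (K : Set E) (x z : E) :
    piK K x z = z + lowestParam K x z • x := rfl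

theorem lowestParam_le (hK : IsCompact K) (hx : x ≠ 0) {t : ℝ} (ht : z + t • x ∈ K) :
    lowestParam K x z ≤ t :=
  csInf_le (isCompact_setOf_add_smul_mem hK hx z).bddBelow ht

theorem piK_mem (hK : IsCompact K) (hx : x ≠ 0) (hz : z ∈ shadow K x) : piK K x z ∈ K := by
  obtain ⟨a, ha, rfl⟩ := hz
  refine (isCompact_setOf_add_smul_mem hK hx _).sInf_mem ⟨inner ℝ x a / ‖x‖ ^ 2, ?_⟩
  rwa [mem_ofPred_eq, projHyp_add_smul_eq]

theorem piK_smul {γ : ℝ} (hγ : 0 < γ) (K : Set E) (x z : E) :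
    piK (γ • K) x (γ • z) = γ • piK K x z := by
  have : {t : ℝ | γ • z + t • x ∈ γ • K} = γ • {t : ℝ | z + t • x ∈ K} := by
    ext t
    rw [mem_smul_set_iff_inv_smul_mem₀ hγ.ne', mem_ofPred_eq, mem_smul_set_iff_inv_smul_mem₀ hγ.ne',
      mem_ofPred_eq, smul_add, inv_smul_smul₀ hγ.ne', smul_smul, smul_eq_mul, mul_comm]
  rw [piK, piK, this, Real.sInf_smul_of_nonneg hγ.le, smul_add, smul_smul, smul_eq_mul]

theorem setOf_mem_shadow_lowestParam_le (hK : IsCompact K) (hx : x ≠ 0) (a : ℝ) :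
    {z | z ∈ shadow K x ∧ lowestParam K x z ≤ a}
      = projHyp x '' (K ∩ {y | inner ℝ x y ≤ a * ‖x‖ ^ 2}) := by
  have hx2 : 0 < ‖x‖ ^ 2 := by positivity
  ext z
  constructor
  · rintro ⟨hz, hza⟩
    refine ⟨piK K x z, ⟨piK_mem hK hx hz, ?_⟩, ?_⟩
    · rw [mem_ofPred_eq, piK_eq_add_lowestParam_smul, inner_add_right, real_inner_smul_right,
        inner_of_mem_shadow hz, real_inner_self_eq_norm_sq, zero_add]
      gcongr
    · rw [piK_eq_add_lowestParam_smul, projHyp_add_smul_self, projHyp_of_mem_shadow hz]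
  · rintro ⟨y, ⟨hyK, hya⟩, rfl⟩
    refine ⟨⟨y, hyK, rfl⟩, lowestParam_le hK hx ?_ |>.trans ((div_le_iff₀ hx2).2 hya)⟩
    rwa [projHyp_add_smul_eq]

theorem measurable_indicator_piK (hK : IsCompact K) (hx : x ≠ 0) :
    Measurable ((shadow K x).indicator (piK K x)) := by
  have hS : MeasurableSet (shadow K x) := (isCompact_shadow hK x).measurableSet
  have hparam : Measurable ((shadow K x).indicator (lowestParam K x)) := by
    refine measurable_indicator_of_measurableSet_sublevel hS fun a => ?_
    rw [setOf_mem_shadow_lowestParam_le hK hx]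
    refine ((hK.inter_right ?_).image (continuous_projHyp x)).measurableSet
    exact isClosed_le (continuous_const.inner continuous_id) continuous_const
  have : (shadow K x).indicator (piK K x)
      = (shadow K x).indicator id + fun z => (shadow K x).indicator (lowestParam K x) z • x := by
    ext1 z
    by_cases hz : z ∈ shadow K x <;> simp [hz, piK_eq_add_lowestParam_smul]
  rw [this]
  exact (measurable_id.indicator hS).add (hparam.smul_const x)

end Shadow

section Psi

variable {d : ℕ}

local notation "E" => EuclideanSpace ℝ (Fin d)

theorem psiPt_eq_one_sub_entryParam {K : Set E} {x z : E} (hKc : IsCompact K)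
    (hKconv : Convex ℝ K) (hx : x ≠ 0) (hxK : x ∉ K) (hz : z ∈ shadow K x) :
    PsiPt K x z = 1 - entryParam K x (piK K x z) := by
  have hπ := piK_mem hKc hx hz
  exact hausdorffMeasure_inter_segment_div hKc.isClosed hKconv hπ fun h => hxK (h ▸ hπ)

theorem measurable_indicator_entryParam_piK {K : Set E} {x : E} (hKc : IsCompact K)
    (hKconv : Convex ℝ K) (hx : x ≠ 0) :
    Measurable ((shadow K x).indicator fun z => entryParam K x (piK K x z)) := by
  have hS : MeasurableSet (shadow K x) := (isCompact_shadow hKc x).measurableSet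
  have hπ : MapsTo ((shadow K x).indicator (piK K x)) (shadow K x) K := fun z hz => by
    rw [indicator_of_mem hz]
    exact piK_mem hKc hx hz
  convert measurable_indicator_entryParam hKc.isClosed hKconv x
    (measurable_indicator_piK hKc hx) hS hπ using 1
  exact indicator_congr fun z hz => by rw [indicator_of_mem hz]

theorem integrableOn_psiPt_comp {α : Type*} [MeasurableSpace α] {μ : Measure α} {K : Set E}
    {x : E} (hKc : IsCompact K) (hKconv : Convex ℝ K) (hx : x ≠ 0) (hxK : x ∉ K) {f : α → E}
    (hf : Measurable f) {s : Set α} (hs : MeasurableSet s) (hμs : μ s ≠ ∞)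
    (hfs : MapsTo f s (shadow K x)) :
    IntegrableOn (fun a => PsiPt K x (f a)) s μ := by
  set g := fun z => 1 - (shadow K x).indicator (fun z => entryParam K x (piK K x z)) z
  have hg : Measurable g :=
    measurable_const.sub (measurable_indicator_entryParam_piK hKc hKconv hx)
  have hgf : EqOn (fun a => g (f a)) (fun a => PsiPt K x (f a)) s := fun a ha => by
    simp only [g, indicator_of_mem (hfs ha), psiPt_eq_one_sub_entryParam hKc hKconv hx hxK (hfs ha)]
  refine (Measure.integrableOn_of_bounded (M := 1) hμs (hg.comp hf).aestronglyMeasurable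
    (ae_restrict_of_forall_mem hs fun a ha => ?_)).congr_fun hgf hs
  obtain ⟨⟨h0, h1⟩, -⟩ := entryParam_mem (x := x) hKc.isClosed (piK_mem hKc hx (hfs ha))
  simp only [Function.comp_apply, g, indicator_of_mem (hfs ha), Real.norm_eq_abs, abs_le]
  constructor <;> linarith

theorem psiPt_le_psiPt_smul {A : Set E} {x z : E} (hAc : IsCompact A) (hAconv : Convex ℝ A)
    (h0 : (0 : E) ∈ A) {γ : ℝ} (hγ : 1 ≤ γ) (hx : x ≠ 0) (hxA : x ∉ A) (hxγA : x ∉ γ • A)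
    (hz : z ∈ shadow A x) : PsiPt A x z ≤ PsiPt (γ • A) x (γ • z) := by
  have hγ0 : 0 < γ := zero_lt_one.trans_le hγ
  have hγz : γ • z ∈ shadow (γ • A) x := by
    rw [shadow_smul]
    exact smul_mem_smul_set hz
  rw [psiPt_eq_one_sub_entryParam hAc hAconv hx hxA hz,
    psiPt_eq_one_sub_entryParam (hAc.smul γ) (hAconv.smul γ) hx hxγA hγz, piK_smul hγ0]
  exact sub_le_sub_left (entryParam_smul_le hAconv h0 (piK_mem hAc hx hz) hγ) 1

theorem psiAvg_smul (K : Set E) (x : E) {γ : ℝ} (hγ : γ ≠ 0) (hd : d ≠ 0) :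
    PsiAvg (γ • K) x = (∫ z in shadow K x, PsiPt (γ • K) x (γ • z) ∂μH[(d : ℝ) - 1])
      / (μH[(d : ℝ) - 1] (shadow K x)).toReal := by
  have hs : (0 : ℝ) ≤ d - 1 := sub_nonneg.2 (Nat.one_le_cast.2 (Nat.one_le_iff_ne_zero.2 hd))
  rw [PsiAvg, shadow_smul, setIntegral_smul_set_hausdorffMeasure hs hγ,
    Measure.hausdorffMeasure_smul₀ hs hγ, ENNReal.toReal_smul, NNReal.smul_def, NNReal.coe_rpow,
    coe_nnnorm, Real.norm_eq_abs, smul_eq_mul, smul_eq_mul,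
    mul_div_mul_left _ _ (Real.rpow_pos_of_pos (abs_pos.2 hγ) _).ne']

end Psi

theorem psi_monotone_general {d : ℕ} (A : Set (EuclideanSpace ℝ (Fin d)))
    (hAc : IsCompact A) (hAconv : Convex ℝ A)
    (h0 : (0 : EuclideanSpace ℝ (Fin d)) ∈ A)
    (γ : ℝ) (hγ : 1 < γ)
    (x : EuclideanSpace ℝ (Fin d)) (hx : x ∉ γ • A) :
    PsiAvg A x ≤ PsiAvg (γ • A) x := by
  have hγ0 : γ ≠ 0 := (zero_lt_one.trans hγ).ne'
  have hx0 : x ≠ 0 := fun h => hx (h ▸ ⟨0, h0, smul_zero γ⟩)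
  have hd : d ≠ 0 := by
    rintro rfl
    exact hx0 (Subsingleton.elim x 0)
  have hxA : x ∉ A := fun hxA => hx (hAconv.mem_smul_of_zero_mem h0 hxA hγ.le)
  have hS : MeasurableSet (shadow A x) := (isCompact_shadow hAc x).measurableSet
  rw [PsiAvg, psiAvg_smul A x hγ0 hd]
  by_cases hμS : μH[(d : ℝ) - 1] (shadow A x) = ∞
  · -- both averages are junk values `_ / 0 = 0`
    simp [hμS]
  refine div_le_div_of_nonneg_right (setIntegral_mono_on ?_ ?_ hS fun z hz => ?_)
    ENNReal.toReal_nonneg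
  · exact integrableOn_psiPt_comp hAc hAconv hx0 hxA measurable_id hS hμS (mapsTo_id _)
  · refine integrableOn_psiPt_comp (hAc.smul γ) (hAconv.smul γ) hx0 hx
      (measurable_const_smul γ) hS hμS fun z hz => ?_
    rw [shadow_smul]
    exact smul_mem_smul_set hz
  · exact psiPt_le_psiPt_smul hAc hAconv h0 hγ.le hx0 hxA hx hz

theorem psi_monotone {d : ℕ} (A : Set (EuclideanSpace ℝ (Fin d)))
    (hAc : IsCompact A) (hAconv : Convex ℝ A) (hAint : (interior A).Nonempty)
    (h0 : (0 : EuclideanSpace ℝ (Fin d)) ∈ A)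
    (γ : ℝ) (hγ : 1 < γ)
    (x : EuclideanSpace ℝ (Fin d)) (hx : x ∉ γ • A) :
    PsiAvg A x ≤ PsiAvg (γ • A) x :=
  psi_monotone_general A hAc hAconv h0 γ hγ x hx
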